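/- arXiv:2204.04309 — 4 statements merged into one kernel-verified Lean document; each statement's English description precedes it below -/
import Mathlib

section
/- Under the CLAR assumption, the inverse-probability-of-linkage weighting is unbiased: for every 𝓖-measurable integrable real random variable f (with f/π integrable, which holds automatically since π ≥ δ > 0), E[ w · f ] = E[ f ], where w = 1_{L+Q>0} / (Q + (1−Q)π). (This is the paper's Proposition 1, with f playing the role of the log-likelihood contribution l(β, λ₀).) -/
open MeasureTheory ProbabilityTheory

/-- **Proposition 1 (IPLW unbiasedness under CLAR).**
On a probability space, with linkage indicator `L` and in-trial censoring indicator `Q`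
(both `{0,1}`-valued), a sub-σ-algebra `m𝓖` w.r.t. which `Q` is measurable, and a
`m𝓖`-measurable linkage probability `π` with `δ ≤ π ≤ 1` a.s. (`δ > 0`), the CLAR assumption
`1_{Q=0} · E[1_{L=1} | 𝓖] = 1_{Q=0} · π` a.s. implies that for every `m𝓖`-measurable
integrable `f`, `E[w · f] = E[f]` where `w = 1_{L+Q>0} / (Q + (1−Q)π)`. -/
theorem iplw_unbiased
    {Ω : Type*} {m𝓖 : MeasurableSpace Ω} {m𝓕 : MeasurableSpace Ω} {μ : Measure Ω} [IsProbabilityMeasure μ]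
    (hm𝓖 : m𝓖 ≤ m𝓕)
    (L Q : Ω → ℝ) (hL : Measurable L) (hLval : ∀ ω, L ω = 0 ∨ L ω = 1)
    (hQ : Measurable[m𝓖] Q) (hQval : ∀ ω, Q ω = 0 ∨ Q ω = 1)
    (π : Ω → ℝ) (hπ : StronglyMeasurable[m𝓖] π)
    (δ : ℝ) (hδ : 0 < δ) (hπ_bdd : ∀ᵐ ω ∂μ, δ ≤ π ω ∧ π ω ≤ 1)
    (hCLAR : ∀ᵐ ω ∂μ,
      (if Q ω = 0 then (1 : ℝ) else 0) *
          (μ[fun ω' => if L ω' = 1 then (1 : ℝ) else 0 | m𝓖]) ω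
        = (if Q ω = 0 then (1 : ℝ) else 0) * π ω)
    (f : Ω → ℝ) (hf : StronglyMeasurable[m𝓖] f) (hfInt : Integrable f μ) :
    ∫ ω, (if 0 < L ω + Q ω then (1 : ℝ) else 0) / (Q ω + (1 - Q ω) * π ω) * f ω ∂μ
      = ∫ ω, f ω ∂μ := by
  -- modified π which is everywhere ≥ δ
  set π' : Ω → ℝ := fun ω => max (π ω) δ with hπ'def
  have hπ'pos : ∀ ω, 0 < π' ω := fun ω => lt_of_lt_of_le hδ (le_max_right _ _)
  have hπ'δ : ∀ ω, δ ≤ π' ω := fun ω => le_max_right _ _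
  have hπ'sm : StronglyMeasurable[m𝓖] π' :=
    (Measurable.max hπ.measurable measurable_const).stronglyMeasurable
  -- indicator of Q = 0
  have hQ0meas : MeasurableSet[m𝓖] {ω | Q ω = 0} := hQ (measurableSet_singleton 0)
  -- g = 1_{Q=0} f / π'
  set g : Ω → ℝ := fun ω => (if Q ω = 0 then (1 : ℝ) else 0) * (f ω / π' ω) with hgdef
  have hg_sm : StronglyMeasurable[m𝓖] g := by
    refine StronglyMeasurable.mul ?_ ?_
    · exact (Measurable.ite hQ0meas measurable_const measurable_const).stronglyMeasurable
    · exact (hf.measurable.div hπ'sm.measurable).stronglyMeasurable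
  have hg_bound : ∀ ω, ‖g ω‖ ≤ δ⁻¹ * ‖f ω‖ := by
    intro ω
    have h1 : |f ω| / |π' ω| ≤ δ⁻¹ * |f ω| := by
      rw [abs_of_pos (hπ'pos ω), div_le_iff₀ (hπ'pos ω)]
      have e : δ⁻¹ * |f ω| * δ = |f ω| := by field_simp
      have h2 : δ⁻¹ * |f ω| * δ ≤ δ⁻¹ * |f ω| * π' ω :=
        mul_le_mul_of_nonneg_left (hπ'δ ω)
          (mul_nonneg (inv_nonneg.mpr hδ.le) (abs_nonneg _))
      linarith
    by_cases h : Q ω = 0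
    · simpa [hgdef, h] using h1
    · simp [hgdef, h]
      positivity
  have hg_int : Integrable g μ :=
    Integrable.mono' (hfInt.norm.const_mul δ⁻¹)
      ((hg_sm.mono hm𝓖).aestronglyMeasurable) (Filter.Eventually.of_forall hg_bound)
  -- indicator of L = 1
  set I : Ω → ℝ := fun ω => if L ω = 1 then (1 : ℝ) else 0 with hIdef
  have hI_meas : Measurable[m𝓕] I :=
    Measurable.ite (hL (measurableSet_singleton 1)) measurable_const measurable_const
  have hI_int : Integrable I μ := by
    refine Integrable.mono' (g := fun _ => (1 : ℝ)) (integrable_const 1)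
      hI_meas.aestronglyMeasurable (Filter.Eventually.of_forall fun ω => ?_)
    by_cases h : L ω = 1 <;> simp [hIdef, h]
  have hgI_int : Integrable (fun ω => g ω * I ω) μ := by
    refine Integrable.mono' hg_int.norm
      (((hg_sm.mono hm𝓖).mul hI_meas.stronglyMeasurable).aestronglyMeasurable)
      (Filter.Eventually.of_forall fun ω => ?_)
    by_cases h : L ω = 1
    · simp [hIdef, h]
    · simp [hIdef, h, abs_nonneg]
  haveI : SigmaFinite (μ.trim hm𝓖) := by infer_instance
  -- key step: E[g·I] = E[g·E[I|𝓖]]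
  have hpull : μ[g * I | m𝓖] =ᵐ[μ] g * μ[I | m𝓖] :=
    condExp_mul_of_stronglyMeasurable_left hg_sm hgI_int hI_int
  have hkey : ∫ ω, g ω * I ω ∂μ = ∫ ω, (if Q ω = 0 then (1 : ℝ) else 0) * f ω ∂μ := by
    calc ∫ ω, g ω * I ω ∂μ
        = ∫ ω, (μ[g * I | m𝓖]) ω ∂μ := (integral_condExp hm𝓖 (f := g * I)).symm
      _ = ∫ ω, (if Q ω = 0 then (1 : ℝ) else 0) * f ω ∂μ := by
          apply integral_congr_ae
          filter_upwards [hpull, hCLAR, hπ_bdd] with ω h1 h2 h3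
          rw [h1]
          simp only [Pi.mul_apply]
          have hππ' : π' ω = π ω := max_eq_left h3.1
          have hπne : π ω ≠ 0 := ne_of_gt (lt_of_lt_of_le hδ h3.1)
          by_cases hq : Q ω = 0
          · simp only [hq, if_true, one_mul] at h2 ⊢
            rw [hgdef]
            simp only [hq, if_true, one_mul]
            rw [h2, hππ', div_mul_cancel₀ _ hπne]
          · simp [hgdef, hq]
  -- the other part of the weight
  have hQ1_int : Integrable (fun ω => (if Q ω = 1 then (1 : ℝ) else 0) * f ω) μ := by
    refine Integrable.mono' hfInt.norm
      (((Measurable.ite (hm𝓖 _ (hQ (measurableSet_singleton 1))) measurable_const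
          measurable_const).stronglyMeasurable.mul (hf.mono hm𝓖)).aestronglyMeasurable)
      (Filter.Eventually.of_forall fun ω => ?_)
    by_cases h : Q ω = 1 <;> simp [h, abs_nonneg]
  have hQ0_int : Integrable (fun ω => (if Q ω = 0 then (1 : ℝ) else 0) * f ω) μ := by
    refine Integrable.mono' hfInt.norm
      (((Measurable.ite (hm𝓖 _ hQ0meas) measurable_const
          measurable_const).stronglyMeasurable.mul (hf.mono hm𝓖)).aestronglyMeasurable)
      (Filter.Eventually.of_forall fun ω => ?_)
    by_cases h : Q ω = 0 <;> simp [h, abs_nonneg]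
  -- pointwise a.e. decomposition of the weighted integrand
  have hdecomp : ∀ᵐ ω ∂μ,
      (if 0 < L ω + Q ω then (1 : ℝ) else 0) / (Q ω + (1 - Q ω) * π ω) * f ω
        = (if Q ω = 1 then (1 : ℝ) else 0) * f ω + g ω * I ω := by
    filter_upwards [hπ_bdd] with ω h3
    have hππ' : π' ω = π ω := max_eq_left h3.1
    have hπne : π ω ≠ 0 := ne_of_gt (lt_of_lt_of_le hδ h3.1)
    simp only [hgdef, hIdef, hππ']
    rcases hQval ω with hq | hq <;> rcases hLval ω with hl | hl <;>
        rw [hq, hl] <;> norm_num <;> field_simp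
  rw [integral_congr_ae hdecomp, integral_add hQ1_int hgI_int, hkey,
    ← integral_add hQ1_int hQ0_int]
  apply integral_congr_ae
  apply Filter.Eventually.of_forall
  intro ω
  rcases hQval ω with hq | hq
  · have : ¬ (Q ω = 1) := by rw [hq]; norm_num
    simp [hq, this]
  · have : ¬ (Q ω = 0) := by rw [hq]; norm_num
    simp [hq, this]
end

section
/- Under the CLAR assumption, the variance of an inverse-probability-of-linkage weighted term decomposes as: for every bounded 𝓖-measurable real random variable f, Var( w · f ) = Var( f ) + E[ f² · 1_{Q=0} · (1 − π)/π ], where w = 1_{L+Q>0} / (Q + (1−Q)π). (This is the variance formula Var(𝔾(g₁ f)) appearing in the paper's Proposition B.2 on IPLW weak convergence.) -/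
open MeasureTheory ProbabilityTheory

/-- **Variance decomposition of the IPLW term (Proposition B.2).**
Under CLAR, for every bounded `m𝓖`-measurable `f`,
`Var(w · f) = Var(f) + E[ f² · 1_{Q=0} · (1 − π)/π ]`,
where `w = 1_{L+Q>0} / (Q + (1−Q)π)`. -/
theorem iplw_variance_decomposition
    {Ω : Type*} {m𝓖 : MeasurableSpace Ω} {m𝓕 : MeasurableSpace Ω} {μ : Measure Ω} [IsProbabilityMeasure μ]
    (hm𝓖 : m𝓖 ≤ m𝓕)
    (L Q : Ω → ℝ) (hL : Measurable L) (hLval : ∀ ω, L ω = 0 ∨ L ω = 1)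
    (hQ : Measurable[m𝓖] Q) (hQval : ∀ ω, Q ω = 0 ∨ Q ω = 1)
    (π : Ω → ℝ) (hπ : StronglyMeasurable[m𝓖] π)
    (δ : ℝ) (hδ : 0 < δ) (hπ_bdd : ∀ᵐ ω ∂μ, δ ≤ π ω ∧ π ω ≤ 1)
    (hCLAR : ∀ᵐ ω ∂μ,
      (if Q ω = 0 then (1 : ℝ) else 0) *
          (μ[fun ω' => if L ω' = 1 then (1 : ℝ) else 0 | m𝓖]) ω
        = (if Q ω = 0 then (1 : ℝ) else 0) * π ω)
    (f : Ω → ℝ) (hf : StronglyMeasurable[m𝓖] f) (hf_bdd : ∃ C, ∀ ω, |f ω| ≤ C) :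
    variance (fun ω =>
        (if 0 < L ω + Q ω then (1 : ℝ) else 0) / (Q ω + (1 - Q ω) * π ω) * f ω) μ
      = variance f μ
        + ∫ ω, (f ω) ^ 2 * (if Q ω = 0 then (1 : ℝ) else 0) * (1 - π ω) / π ω ∂μ := by
  classical
  obtain ⟨C, hC⟩ := hf_bdd
  set D : ℝ := |C| with hDdef
  have hD : ∀ ω, |f ω| ≤ D := fun ω => (hC ω).trans (le_abs_self C)
  have hD0 : 0 ≤ D := abs_nonneg C
  -- basic measurability
  have hfm : Measurable[m𝓕] f := hf.measurable.mono hm𝓖 le_rfl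
  have hπm : Measurable[m𝓕] π := hπ.measurable.mono hm𝓖 le_rfl
  have hQm : Measurable[m𝓕] Q := hQ.mono hm𝓖 le_rfl
  have hILG : Measurable[m𝓕] (fun ω => if L ω = 1 then (1:ℝ) else 0) :=
    Measurable.ite (hL (measurableSet_singleton 1)) measurable_const measurable_const
  have hILm : Measurable[m𝓕] (fun ω => if L ω = 1 then (1:ℝ) else 0) := hILG
  have hχG : Measurable[m𝓖] (fun ω => if Q ω = 0 then (1:ℝ) else 0) :=
    Measurable.ite (hQ (measurableSet_singleton 0)) measurable_const measurable_const
  have hχm : Measurable[m𝓕] (fun ω => if Q ω = 0 then (1:ℝ) else 0) := hχG.mono hm𝓖 le_rfl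
  have hχ01 : ∀ ω, (if Q ω = 0 then (1:ℝ) else 0) = 0 ∨ (if Q ω = 0 then (1:ℝ) else 0) = 1 := by
    intro ω; split <;> simp
  -- generic integrability from a.e. bound
  have intg : ∀ (h : Ω → ℝ) (D : ℝ), Measurable[m𝓕] h → (∀ᵐ ω ∂μ, |h ω| ≤ D) → Integrable h μ :=
    fun h D hh hb =>
      (memLp_top_of_bound (μ := μ) hh.aestronglyMeasurable D
        (by simpa [Real.norm_eq_abs] using hb)).integrable le_top
  set g := μ[fun ω' => if L ω' = 1 then (1:ℝ) else 0 | m𝓖] with hgdef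
  -- key conditional-expectation identity
  have key : ∀ (h : Ω → ℝ) (B : ℝ), StronglyMeasurable[m𝓖] h → (∀ᵐ ω ∂μ, |h ω| ≤ B) →
      ∫ ω, h ω * (if L ω = 1 then (1:ℝ) else 0) ∂μ = ∫ ω, h ω * g ω ∂μ := by
    intro h B hhG hhB
    have hIL_int : Integrable (fun ω => if L ω = 1 then (1:ℝ) else 0) μ :=
      intg _ 1 hILm (Filter.Eventually.of_forall fun ω => by split <;> simp)
    have hnorm : ∀ᵐ ω ∂μ, ‖h ω‖ ≤ B := by simpa [Real.norm_eq_abs] using hhB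
    have hmul := condExp_stronglyMeasurable_mul_of_bound hm𝓖 hhG hIL_int B hnorm
    calc ∫ ω, h ω * (if L ω = 1 then (1:ℝ) else 0) ∂μ
        = ∫ ω, (μ[(h * fun ω' => if L ω' = 1 then (1:ℝ) else 0) | m𝓖]) ω ∂μ :=
          (integral_condExp hm𝓖).symm
      _ = ∫ ω, (h * g) ω ∂μ := integral_congr_ae hmul
      _ = ∫ ω, h ω * g ω ∂μ := rfl
  have hπ_pos : ∀ᵐ ω ∂μ, 0 < π ω := hπ_bdd.mono fun ω h => hδ.trans_le h.1
  -- a.e. pointwise bounds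
  have hb1 : ∀ᵐ ω ∂μ, |(if Q ω = 0 then (1:ℝ) else 0) * f ω / π ω| ≤ D / δ := by
    filter_upwards [hπ_bdd] with ω hπω
    by_cases hq : Q ω = 0
    · rw [if_pos hq, one_mul, abs_div, abs_of_pos (hδ.trans_le hπω.1)]
      exact div_le_div₀ hD0 (hD ω) hδ hπω.1
    · rw [if_neg hq, zero_mul, zero_div, abs_zero]
      positivity
  have hb2 : ∀ᵐ ω ∂μ, |(if Q ω = 0 then (1:ℝ) else 0) * f ω ^ 2 / π ω ^ 2| ≤ D ^ 2 / δ ^ 2 := by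
    filter_upwards [hπ_bdd] with ω hπω
    by_cases hq : Q ω = 0
    · rw [if_pos hq, one_mul, abs_div, abs_of_pos (pow_pos (hδ.trans_le hπω.1) 2)]
      refine div_le_div₀ (by positivity) ?_ (by positivity) ?_
      · rw [abs_pow]; exact pow_le_pow_left₀ (abs_nonneg _) (hD ω) 2
      · exact pow_le_pow_left₀ hδ.le hπω.1 2
    · rw [if_neg hq, zero_mul, zero_div, abs_zero]
      positivity
  have hb3 : ∀ᵐ ω ∂μ, |(1 - (if Q ω = 0 then (1:ℝ) else 0)) * f ω| ≤ D :=
    Filter.Eventually.of_forall fun ω => by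
      by_cases hq : Q ω = 0
      · simp [hq, hD0]
      · simpa [hq] using hD ω
  have hb4 : ∀ᵐ ω ∂μ, |(1 - (if Q ω = 0 then (1:ℝ) else 0)) * f ω ^ 2| ≤ D ^ 2 :=
    Filter.Eventually.of_forall fun ω => by
      by_cases hq : Q ω = 0
      · simp [hq]; positivity
      · rw [if_neg hq, sub_zero, one_mul, abs_pow]
        exact pow_le_pow_left₀ (abs_nonneg _) (hD ω) 2
  have hb5 : ∀ᵐ ω ∂μ, |(if Q ω = 0 then (1:ℝ) else 0) * f ω| ≤ D :=
    Filter.Eventually.of_forall fun ω => by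
      by_cases hq : Q ω = 0
      · simpa [hq] using hD ω
      · simp [hq, hD0]
  have hb6 : ∀ᵐ ω ∂μ, |(if Q ω = 0 then (1:ℝ) else 0) * f ω ^ 2| ≤ D ^ 2 :=
    Filter.Eventually.of_forall fun ω => by
      by_cases hq : Q ω = 0
      · rw [if_pos hq, one_mul, abs_pow]
        exact pow_le_pow_left₀ (abs_nonneg _) (hD ω) 2
      · simp [hq]; positivity
  have hb7 : ∀ᵐ ω ∂μ, |(if Q ω = 0 then (1:ℝ) else 0) * f ω ^ 2 / π ω| ≤ D ^ 2 / δ := by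
    filter_upwards [hπ_bdd] with ω hπω
    by_cases hq : Q ω = 0
    · rw [if_pos hq, one_mul, abs_div, abs_of_pos (hδ.trans_le hπω.1)]
      refine div_le_div₀ (by positivity) ?_ hδ hπω.1
      rw [abs_pow]; exact pow_le_pow_left₀ (abs_nonneg _) (hD ω) 2
    · rw [if_neg hq, zero_mul, zero_div, abs_zero]
      positivity
  have hb8 : ∀ᵐ ω ∂μ, |f ω ^ 2 * (if Q ω = 0 then (1:ℝ) else 0) * (1 - π ω) / π ω| ≤ D ^ 2 / δ := by
    filter_upwards [hπ_bdd] with ω hπω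
    by_cases hq : Q ω = 0
    · rw [if_pos hq, mul_one, abs_div, abs_of_pos (hδ.trans_le hπω.1)]
      refine div_le_div₀ (by positivity) ?_ hδ hπω.1
      rw [abs_mul, abs_pow]
      calc |f ω| ^ 2 * |1 - π ω| ≤ D ^ 2 * 1 := by
            refine mul_le_mul (pow_le_pow_left₀ (abs_nonneg _) (hD ω) 2) ?_ (abs_nonneg _)
              (by positivity)
            rw [abs_of_nonneg (by linarith [hπω.2])]
            linarith [hδ.trans_le hπω.1]
        _ = D ^ 2 := mul_one _
    · rw [if_neg hq, mul_zero, zero_mul, zero_div, abs_zero]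
      positivity
  -- integrability of the pieces
  have hILb : ∀ ω, |(if L ω = 1 then (1:ℝ) else 0)| ≤ 1 := fun ω => by split <;> simp
  have mh1 : Measurable[m𝓕] (fun ω => (if Q ω = 0 then (1:ℝ) else 0) * f ω / π ω) :=
    (hχm.mul hfm).div hπm
  have mh2 : Measurable[m𝓕] (fun ω => (if Q ω = 0 then (1:ℝ) else 0) * f ω ^ 2 / π ω ^ 2) :=
    (hχm.mul (hfm.pow_const 2)).div (hπm.pow_const 2)
  have int_h1IL : Integrable (fun ω =>
      ((if Q ω = 0 then (1:ℝ) else 0) * f ω / π ω) * (if L ω = 1 then (1:ℝ) else 0)) μ := by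
    refine intg _ (D / δ) (mh1.mul hILm) ?_
    filter_upwards [hb1] with ω h
    rw [abs_mul]
    calc |(if Q ω = 0 then (1:ℝ) else 0) * f ω / π ω| * |(if L ω = 1 then (1:ℝ) else 0)|
        ≤ (D / δ) * 1 := mul_le_mul h (hILb ω) (abs_nonneg _) (by positivity)
      _ = D / δ := mul_one _
  have int_h2IL : Integrable (fun ω =>
      ((if Q ω = 0 then (1:ℝ) else 0) * f ω ^ 2 / π ω ^ 2) * (if L ω = 1 then (1:ℝ) else 0)) μ := by
    refine intg _ (D ^ 2 / δ ^ 2) (mh2.mul hILm) ?_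
    filter_upwards [hb2] with ω h
    rw [abs_mul]
    calc |(if Q ω = 0 then (1:ℝ) else 0) * f ω ^ 2 / π ω ^ 2| * |(if L ω = 1 then (1:ℝ) else 0)|
        ≤ (D ^ 2 / δ ^ 2) * 1 := mul_le_mul h (hILb ω) (abs_nonneg _) (by positivity)
      _ = D ^ 2 / δ ^ 2 := mul_one _
  have int_r1 : Integrable (fun ω => (1 - (if Q ω = 0 then (1:ℝ) else 0)) * f ω) μ :=
    intg _ D ((measurable_const.sub hχm).mul hfm) hb3
  have int_r2 : Integrable (fun ω => (1 - (if Q ω = 0 then (1:ℝ) else 0)) * f ω ^ 2) μ :=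
    intg _ (D ^ 2) ((measurable_const.sub hχm).mul (hfm.pow_const 2)) hb4
  have int_c1 : Integrable (fun ω => (if Q ω = 0 then (1:ℝ) else 0) * f ω) μ :=
    intg _ D (hχm.mul hfm) hb5
  have int_c2 : Integrable (fun ω => (if Q ω = 0 then (1:ℝ) else 0) * f ω ^ 2) μ :=
    intg _ (D ^ 2) (hχm.mul (hfm.pow_const 2)) hb6
  have int_c2π : Integrable (fun ω => (if Q ω = 0 then (1:ℝ) else 0) * f ω ^ 2 / π ω) μ :=
    intg _ (D ^ 2 / δ) ((hχm.mul (hfm.pow_const 2)).div hπm) hb7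
  have int_tail : Integrable (fun ω =>
      f ω ^ 2 * (if Q ω = 0 then (1:ℝ) else 0) * (1 - π ω) / π ω) μ :=
    intg _ (D ^ 2 / δ)
      (((hfm.pow_const 2).mul hχm |>.mul (measurable_const.sub hπm)).div hπm) hb8
  -- strongly measurable (w.r.t. m𝓖) versions
  have hχSM : StronglyMeasurable[m𝓖] (fun ω => if Q ω = 0 then (1:ℝ) else 0) :=
    hχG.stronglyMeasurable
  have h1SM : StronglyMeasurable[m𝓖] (fun ω => (if Q ω = 0 then (1:ℝ) else 0) * f ω / π ω) :=
    ((hχG.mul hf.measurable).div hπ.measurable).stronglyMeasurable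
  have h2SM : StronglyMeasurable[m𝓖]
      (fun ω => (if Q ω = 0 then (1:ℝ) else 0) * f ω ^ 2 / π ω ^ 2) :=
    ((hχG.mul (hf.measurable.pow_const 2)).div
      (hπ.measurable.pow_const 2)).stronglyMeasurable
  -- CLAR consequences
  have e1 : ∫ ω, ((if Q ω = 0 then (1:ℝ) else 0) * f ω / π ω) * g ω ∂μ
      = ∫ ω, (if Q ω = 0 then (1:ℝ) else 0) * f ω ∂μ := by
    refine integral_congr_ae ?_
    filter_upwards [hCLAR, hπ_pos] with ω hc hp
    have hne : π ω ≠ 0 := ne_of_gt hp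
    have h' : (if Q ω = 0 then (1:ℝ) else 0) * f ω / π ω * g ω
        = (f ω / π ω) * ((if Q ω = 0 then (1:ℝ) else 0) * g ω) := by ring
    rw [h', hc]
    field_simp
  have e2 : ∫ ω, ((if Q ω = 0 then (1:ℝ) else 0) * f ω ^ 2 / π ω ^ 2) * g ω ∂μ
      = ∫ ω, (if Q ω = 0 then (1:ℝ) else 0) * f ω ^ 2 / π ω ∂μ := by
    refine integral_congr_ae ?_
    filter_upwards [hCLAR, hπ_pos] with ω hc hp
    have hne : π ω ≠ 0 := ne_of_gt hp
    have h' : (if Q ω = 0 then (1:ℝ) else 0) * f ω ^ 2 / π ω ^ 2 * g ω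
        = (f ω ^ 2 / π ω ^ 2) * ((if Q ω = 0 then (1:ℝ) else 0) * g ω) := by ring
    rw [h', hc]
    field_simp
  -- pointwise decompositions of the weighted term
  have split1 : ∀ ω, (if 0 < L ω + Q ω then (1:ℝ) else 0) / (Q ω + (1 - Q ω) * π ω) * f ω
      = ((if Q ω = 0 then (1:ℝ) else 0) * f ω / π ω) * (if L ω = 1 then (1:ℝ) else 0)
        + (1 - (if Q ω = 0 then (1:ℝ) else 0)) * f ω := by
    intro ω
    rcases hQval ω with hq | hq <;> rcases hLval ω with hl | hl <;>
      norm_num [hq, hl] <;> ring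
  have split2 : ∀ ω, ((if 0 < L ω + Q ω then (1:ℝ) else 0) / (Q ω + (1 - Q ω) * π ω) * f ω) ^ 2
      = ((if Q ω = 0 then (1:ℝ) else 0) * f ω ^ 2 / π ω ^ 2) * (if L ω = 1 then (1:ℝ) else 0)
        + (1 - (if Q ω = 0 then (1:ℝ) else 0)) * f ω ^ 2 := by
    intro ω
    rcases hQval ω with hq | hq <;> rcases hLval ω with hl | hl <;>
      norm_num [hq, hl] <;> ring
  -- first moment
  have hEwf : ∫ ω, (if 0 < L ω + Q ω then (1:ℝ) else 0) / (Q ω + (1 - Q ω) * π ω) * f ω ∂μ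
      = ∫ ω, f ω ∂μ := by
    calc ∫ ω, (if 0 < L ω + Q ω then (1:ℝ) else 0) / (Q ω + (1 - Q ω) * π ω) * f ω ∂μ
        = ∫ ω, (((if Q ω = 0 then (1:ℝ) else 0) * f ω / π ω) * (if L ω = 1 then (1:ℝ) else 0)
            + (1 - (if Q ω = 0 then (1:ℝ) else 0)) * f ω) ∂μ := by
          exact integral_congr_ae (Filter.Eventually.of_forall split1)
      _ = (∫ ω, ((if Q ω = 0 then (1:ℝ) else 0) * f ω / π ω) * (if L ω = 1 then (1:ℝ) else 0) ∂μ)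
            + ∫ ω, (1 - (if Q ω = 0 then (1:ℝ) else 0)) * f ω ∂μ :=
          integral_add int_h1IL int_r1
      _ = (∫ ω, ((if Q ω = 0 then (1:ℝ) else 0) * f ω / π ω) * g ω ∂μ)
            + ∫ ω, (1 - (if Q ω = 0 then (1:ℝ) else 0)) * f ω ∂μ := by
          rw [key _ (D / δ) h1SM hb1]
      _ = (∫ ω, (if Q ω = 0 then (1:ℝ) else 0) * f ω ∂μ)
            + ∫ ω, (1 - (if Q ω = 0 then (1:ℝ) else 0)) * f ω ∂μ := by rw [e1]
      _ = ∫ ω, ((if Q ω = 0 then (1:ℝ) else 0) * f ω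
            + (1 - (if Q ω = 0 then (1:ℝ) else 0)) * f ω) ∂μ := (integral_add int_c1 int_r1).symm
      _ = ∫ ω, f ω ∂μ := integral_congr_ae (Filter.Eventually.of_forall fun ω => by ring)
  -- second moment
  have hEwf2 : ∫ ω, ((if 0 < L ω + Q ω then (1:ℝ) else 0) / (Q ω + (1 - Q ω) * π ω) * f ω) ^ 2 ∂μ
      = (∫ ω, (if Q ω = 0 then (1:ℝ) else 0) * f ω ^ 2 / π ω ∂μ)
        + ∫ ω, (1 - (if Q ω = 0 then (1:ℝ) else 0)) * f ω ^ 2 ∂μ := by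
    calc ∫ ω, ((if 0 < L ω + Q ω then (1:ℝ) else 0) / (Q ω + (1 - Q ω) * π ω) * f ω) ^ 2 ∂μ
        = ∫ ω, (((if Q ω = 0 then (1:ℝ) else 0) * f ω ^ 2 / π ω ^ 2)
              * (if L ω = 1 then (1:ℝ) else 0)
            + (1 - (if Q ω = 0 then (1:ℝ) else 0)) * f ω ^ 2) ∂μ :=
          integral_congr_ae (Filter.Eventually.of_forall split2)
      _ = (∫ ω, ((if Q ω = 0 then (1:ℝ) else 0) * f ω ^ 2 / π ω ^ 2)
              * (if L ω = 1 then (1:ℝ) else 0) ∂μ)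
            + ∫ ω, (1 - (if Q ω = 0 then (1:ℝ) else 0)) * f ω ^ 2 ∂μ :=
          integral_add int_h2IL int_r2
      _ = (∫ ω, ((if Q ω = 0 then (1:ℝ) else 0) * f ω ^ 2 / π ω ^ 2) * g ω ∂μ)
            + ∫ ω, (1 - (if Q ω = 0 then (1:ℝ) else 0)) * f ω ^ 2 ∂μ := by
          rw [key _ (D ^ 2 / δ ^ 2) h2SM hb2]
      _ = (∫ ω, (if Q ω = 0 then (1:ℝ) else 0) * f ω ^ 2 / π ω ∂μ)
            + ∫ ω, (1 - (if Q ω = 0 then (1:ℝ) else 0)) * f ω ^ 2 ∂μ := by rw [e2]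
  -- Memℒp facts for variance_def'
  have hfmem : MemLp f 2 μ :=
    (memLp_top_of_bound hfm.aestronglyMeasurable D
      (Filter.Eventually.of_forall fun ω => by simpa [Real.norm_eq_abs] using hD ω)).mono_exponent
      le_top
  have hWmG : Measurable[m𝓕] (fun ω =>
      (if 0 < L ω + Q ω then (1:ℝ) else 0) / (Q ω + (1 - Q ω) * π ω) * f ω) := by
    refine Measurable.mul ?_ hfm
    exact (Measurable.ite (measurableSet_lt measurable_const (hL.add hQm))
      measurable_const measurable_const).div
      (hQm.add ((measurable_const.sub hQm).mul hπm))
  have hWm : Measurable[m𝓕] (fun ω =>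
      (if 0 < L ω + Q ω then (1:ℝ) else 0) / (Q ω + (1 - Q ω) * π ω) * f ω) :=
    hWmG
  have hWmem : MemLp (fun ω =>
      (if 0 < L ω + Q ω then (1:ℝ) else 0) / (Q ω + (1 - Q ω) * π ω) * f ω) 2 μ := by
    refine (memLp_top_of_bound hWm.aestronglyMeasurable (D / δ + D) ?_).mono_exponent le_top
    filter_upwards [hb1] with ω h
    rw [Real.norm_eq_abs, split1 ω]
    calc |((if Q ω = 0 then (1:ℝ) else 0) * f ω / π ω) * (if L ω = 1 then (1:ℝ) else 0)
          + (1 - (if Q ω = 0 then (1:ℝ) else 0)) * f ω|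
        ≤ |((if Q ω = 0 then (1:ℝ) else 0) * f ω / π ω) * (if L ω = 1 then (1:ℝ) else 0)|
          + |(1 - (if Q ω = 0 then (1:ℝ) else 0)) * f ω| := abs_add_le _ _
      _ ≤ D / δ + D := by
          refine add_le_add ?_ ?_
          · rw [abs_mul]
            calc |(if Q ω = 0 then (1:ℝ) else 0) * f ω / π ω| * |(if L ω = 1 then (1:ℝ) else 0)|
                ≤ (D / δ) * 1 := mul_le_mul h (hILb ω) (abs_nonneg _) (by positivity)
              _ = D / δ := mul_one _
          · by_cases hq : Q ω = 0
            · simp [hq, hD0]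
            · simpa [hq] using hD ω
  -- the tail identity
  have A : ∫ ω, (if Q ω = 0 then (1:ℝ) else 0) * f ω ^ 2 / π ω ∂μ
      = (∫ ω, (if Q ω = 0 then (1:ℝ) else 0) * f ω ^ 2 ∂μ)
        + ∫ ω, f ω ^ 2 * (if Q ω = 0 then (1:ℝ) else 0) * (1 - π ω) / π ω ∂μ := by
    rw [← integral_add int_c2 int_tail]
    refine integral_congr_ae ?_
    filter_upwards [hπ_pos] with ω hp
    have hne : π ω ≠ 0 := ne_of_gt hp
    by_cases hq : Q ω = 0
    · rw [if_pos hq]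
      field_simp
      ring
    · rw [if_neg hq]
      simp
  have B : (∫ ω, (if Q ω = 0 then (1:ℝ) else 0) * f ω ^ 2 ∂μ)
      + ∫ ω, (1 - (if Q ω = 0 then (1:ℝ) else 0)) * f ω ^ 2 ∂μ = ∫ ω, f ω ^ 2 ∂μ := by
    rw [← integral_add int_c2 int_r2]
    exact integral_congr_ae (Filter.Eventually.of_forall fun ω => by ring)
  -- assemble
  rw [variance_eq_sub hWmem, variance_eq_sub hfmem]
  simp only [Pi.pow_apply]
  rw [hEwf, hEwf2]
  linarith [A, B]
end

section
/- Under the CLAR assumption, the covariance between the weighted term and the linkage score is: for all bounded 𝓖-measurable real random variables f and φ, E[ (w · f) · 1_{Q=0} · (1_{L=1} − π) · φ ] = E[ 1_{Q=0} · (1 − π) · f · φ ], where w = 1_{L+Q>0} / (Q + (1−Q)π). (With φ a component of X̃ this identifies the cross term Q_e(f) = E[1_{Q=0}(1 − π_{γ₀}(X)) f X̃] in the limiting covariance of the paper's Proposition B.2.) -/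
open MeasureTheory ProbabilityTheory

private lemma integrable_of_bdd' {Ω : Type*} {m : MeasurableSpace Ω} {μ : Measure Ω}
    [IsFiniteMeasure μ] {h : Ω → ℝ} (hm : AEStronglyMeasurable h μ) (C : ℝ)
    (hb : ∀ᵐ ω ∂μ, |h ω| ≤ C) : Integrable h μ :=
  Integrable.mono' (integrable_const C) hm hb

/-- **Cross-term identity for the IPLW term and the linkage score (Proposition B.2).**
Under CLAR, for bounded `m𝓖`-measurable `f` and `φ`,
`E[ (w · f) · 1_{Q=0} · (1_{L=1} − π) · φ ] = E[ 1_{Q=0} · (1 − π) · f · φ ]`,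
where `w = 1_{L+Q>0} / (Q + (1−Q)π)`. -/
theorem iplw_score_cross_term
    {Ω : Type*} {m𝓖 : MeasurableSpace Ω} {m𝓕 : MeasurableSpace Ω} {μ : Measure Ω} [IsProbabilityMeasure μ]
    (hm𝓖 : m𝓖 ≤ m𝓕)
    (L Q : Ω → ℝ) (hL : Measurable L) (hLval : ∀ ω, L ω = 0 ∨ L ω = 1)
    (hQ : Measurable[m𝓖] Q) (hQval : ∀ ω, Q ω = 0 ∨ Q ω = 1)
    (π : Ω → ℝ) (hπ : StronglyMeasurable[m𝓖] π)
    (δ : ℝ) (hδ : 0 < δ) (hπ_bdd : ∀ᵐ ω ∂μ, δ ≤ π ω ∧ π ω ≤ 1)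
    (hCLAR : ∀ᵐ ω ∂μ,
      (if Q ω = 0 then (1 : ℝ) else 0) *
          (μ[fun ω' => if L ω' = 1 then (1 : ℝ) else 0 | m𝓖]) ω
        = (if Q ω = 0 then (1 : ℝ) else 0) * π ω)
    (f : Ω → ℝ) (hf : StronglyMeasurable[m𝓖] f) (hf_bdd : ∃ C, ∀ ω, |f ω| ≤ C)
    (φ : Ω → ℝ) (hφ : StronglyMeasurable[m𝓖] φ) (hφ_bdd : ∃ C, ∀ ω, |φ ω| ≤ C) :
    ∫ ω, ((if 0 < L ω + Q ω then (1 : ℝ) else 0) / (Q ω + (1 - Q ω) * π ω) * f ω)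
          * ((if Q ω = 0 then (1 : ℝ) else 0)
              * ((if L ω = 1 then (1 : ℝ) else 0) - π ω) * φ ω) ∂μ
      = ∫ ω, (if Q ω = 0 then (1 : ℝ) else 0) * (1 - π ω) * f ω * φ ω ∂μ := by
  obtain ⟨Cf, hCf⟩ := hf_bdd
  obtain ⟨Cφ, hCφ⟩ := hφ_bdd
  set ι : Ω → ℝ := fun ω => if L ω = 1 then (1 : ℝ) else 0 with hι_def
  set g : Ω → ℝ := fun ω =>
    (if Q ω = 0 then (1 : ℝ) else 0) * ((1 - π ω) / π ω) * f ω * φ ω with hg_def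
  -- measurability of g
  have hQ0 : MeasurableSet[m𝓖] {ω | Q ω = 0} := hQ (measurableSet_singleton 0)
  have hg_meas : StronglyMeasurable[m𝓖] g := by
    apply StronglyMeasurable.mul _ hφ
    apply StronglyMeasurable.mul _ hf
    apply StronglyMeasurable.mul
    · exact (Measurable.ite hQ0 measurable_const measurable_const).stronglyMeasurable
    · exact ((measurable_const.sub hπ.measurable).div hπ.measurable).stronglyMeasurable
  -- bounds
  have hg_bdd : ∀ᵐ ω ∂μ, |g ω| ≤ (1 / δ) * Cf * Cφ := by
    filter_upwards [hπ_bdd] with ω ⟨h1, h2⟩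
    have hπpos : 0 < π ω := lt_of_lt_of_le hδ h1
    have h3 : |(if Q ω = 0 then (1 : ℝ) else 0)| ≤ 1 := by split <;> simp
    have h4 : |(1 - π ω) / π ω| ≤ 1 / δ := by
      rw [abs_div, div_le_div_iff₀ (abs_pos.mpr (ne_of_gt hπpos)) hδ]
      have : |1 - π ω| ≤ 1 := by rw [abs_le]; constructor <;> nlinarith
      have : δ ≤ |π ω| := le_trans h1 (le_abs_self _)
      nlinarith [abs_nonneg (1 - π ω)]
    have hCf0 : (0:ℝ) ≤ Cf := le_trans (abs_nonneg _) (hCf ω)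
    have hCφ0 : (0:ℝ) ≤ Cφ := le_trans (abs_nonneg _) (hCφ ω)
    simp only [hg_def, abs_mul]
    calc |(if Q ω = 0 then (1:ℝ) else 0)| * |(1 - π ω) / π ω| * |f ω| * |φ ω|
        ≤ 1 * (1/δ) * Cf * Cφ := by
          apply mul_le_mul (mul_le_mul (mul_le_mul h3 h4 (abs_nonneg _) (by norm_num))
            (hCf ω) (abs_nonneg _) (by positivity)) (hCφ ω) (abs_nonneg _) (by positivity)
      _ = (1/δ) * Cf * Cφ := by ring
  have hg_meas' : @AEStronglyMeasurable Ω ℝ _ m𝓕 m𝓕 g μ := (hg_meas.mono hm𝓖).aestronglyMeasurable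
  have hg_int : Integrable g μ := integrable_of_bdd' hg_meas' _ hg_bdd
  have hι_meas : StronglyMeasurable[m𝓕] ι := by
    have h : Measurable[m𝓕] ι :=
      Measurable.ite (hL (measurableSet_singleton 1)) measurable_const measurable_const
    exact (h.stronglyMeasurable)
  have hι_int : Integrable ι μ := by
    apply integrable_of_bdd' (μ := μ) hι_meas.aestronglyMeasurable 1
    filter_upwards with ω
    simp only [hι_def]; split <;> simp
  have hgι_int : Integrable (g * ι) μ := by
    apply integrable_of_bdd' (hg_meas'.mul (hι_meas.aestronglyMeasurable (μ := μ))) ((1/δ) * Cf * Cφ)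
    filter_upwards [hg_bdd, hπ_bdd] with ω hb _
    simp only [Pi.mul_apply, abs_mul]
    have h1 : |ι ω| ≤ 1 := by simp only [hι_def]; split <;> simp
    have h0 : (0:ℝ) ≤ (1/δ) * Cf * Cφ := le_trans (abs_nonneg _) hb
    nlinarith [abs_nonneg (g ω), abs_nonneg (ι ω)]
  -- Step 1: LHS integrand = g * ι a.e.
  have step1 : ∀ᵐ ω ∂μ,
      ((if 0 < L ω + Q ω then (1 : ℝ) else 0) / (Q ω + (1 - Q ω) * π ω) * f ω)
          * ((if Q ω = 0 then (1 : ℝ) else 0)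
              * ((if L ω = 1 then (1 : ℝ) else 0) - π ω) * φ ω)
        = g ω * ι ω := by
    filter_upwards [hπ_bdd] with ω ⟨h1, h2⟩
    have hπpos : 0 < π ω := lt_of_lt_of_le hδ h1
    have hπne : π ω ≠ 0 := ne_of_gt hπpos
    rcases hQval ω with hq | hq
    · rcases hLval ω with hl | hl
      · simp only [hg_def, hι_def, hq, hl]
        norm_num
      · simp only [hg_def, hι_def, hq, hl]
        norm_num
        field_simp
    · simp only [hg_def, hι_def, hq]
      norm_num
  rw [integral_congr_ae step1]
  -- Step 2: conditioning
  have step2 : μ[g * ι | m𝓖] =ᵐ[μ] g * μ[ι | m𝓖] :=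
    condExp_mul_of_stronglyMeasurable_left hg_meas hgι_int hι_int
  have key : ∫ ω, g ω * ι ω ∂μ = ∫ ω, g ω * (μ[ι | m𝓖]) ω ∂μ := by
    calc ∫ ω, g ω * ι ω ∂μ = ∫ ω, (g * ι) ω ∂μ := rfl
      _ = ∫ ω, (μ[g * ι | m𝓖]) ω ∂μ := (integral_condExp hm𝓖).symm
      _ = ∫ ω, g ω * (μ[ι | m𝓖]) ω ∂μ := integral_congr_ae step2
  rw [key]
  -- Step 3: rewrite using CLAR
  apply integral_congr_ae
  filter_upwards [hCLAR, hπ_bdd] with ω hc ⟨h1, h2⟩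
  have hπne : π ω ≠ 0 := ne_of_gt (lt_of_lt_of_le hδ h1)
  simp only [hg_def]
  rcases hQval ω with hq | hq
  · simp only [hq, if_pos rfl] at hc ⊢
    have : (μ[ι | m𝓖]) ω = π ω := by simpa [hι_def] using hc
    rw [this]
    field_simp
  · have : ¬ (Q ω = 0) := by rw [hq]; norm_num
    simp [this]
end

section
/- Doubly-robust identity, propensity-correct direction: under the CLAR assumption, for every bounded 𝓖-measurable real random variable h and every bounded 𝓖-measurable real random variable m (representing the outcome regression m₀(X), possibly misspecified), E[ 1_{Q=1} · h + 1_{Q=0} · (1_{L=1}/π) · h + 1_{Q=0} · (1 − 1_{L=1}/π) · m ] = E[ h ]. (This is the claim in the paper's Appendix D that the augmented estimating function is unbiased when the linkage probability is correctly specified, regardless of the outcome models.) -/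
open MeasureTheory ProbabilityTheory

/-- **Doubly-robust identity, propensity-correct direction (Appendix D).**
Under CLAR, for every bounded `m𝓖`-measurable `h` and every bounded `m𝓖`-measurable `m`
(a possibly misspecified outcome regression),
`E[ 1_{Q=1} h + 1_{Q=0} (1_{L=1}/π) h + 1_{Q=0} (1 − 1_{L=1}/π) m ] = E[h]`. -/
theorem aiplw_unbiased_propensity_correct
    {Ω : Type*} {m𝓖 : MeasurableSpace Ω} {m𝓕 : MeasurableSpace Ω} {μ : Measure Ω} [IsProbabilityMeasure μ]
    (hm𝓖 : m𝓖 ≤ m𝓕)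
    (L Q : Ω → ℝ) (hL : Measurable L) (hLval : ∀ ω, L ω = 0 ∨ L ω = 1)
    (hQ : Measurable[m𝓖] Q) (hQval : ∀ ω, Q ω = 0 ∨ Q ω = 1)
    (π : Ω → ℝ) (hπ : StronglyMeasurable[m𝓖] π)
    (δ : ℝ) (hδ : 0 < δ) (hπ_bdd : ∀ᵐ ω ∂μ, δ ≤ π ω ∧ π ω ≤ 1)
    (hCLAR : ∀ᵐ ω ∂μ,
      (if Q ω = 0 then (1 : ℝ) else 0) *
          (μ[fun ω' => if L ω' = 1 then (1 : ℝ) else 0 | m𝓖]) ω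
        = (if Q ω = 0 then (1 : ℝ) else 0) * π ω)
    (h : Ω → ℝ) (hh : StronglyMeasurable[m𝓖] h) (hh_bdd : ∃ C, ∀ ω, |h ω| ≤ C)
    (m : Ω → ℝ) (hm : StronglyMeasurable[m𝓖] m) (hm_bdd : ∃ C, ∀ ω, |m ω| ≤ C) :
    ∫ ω, ((if Q ω = 1 then (1 : ℝ) else 0) * h ω
        + (if Q ω = 0 then (1 : ℝ) else 0) * ((if L ω = 1 then (1 : ℝ) else 0) / π ω) * h ω
        + (if Q ω = 0 then (1 : ℝ) else 0)
            * (1 - (if L ω = 1 then (1 : ℝ) else 0) / π ω) * m ω) ∂μ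
      = ∫ ω, h ω ∂μ := by
  obtain ⟨Ch, hCh⟩ := hh_bdd
  obtain ⟨Cm, hCm⟩ := hm_bdd
  set g : Ω → ℝ := fun ω => if L ω = 1 then (1 : ℝ) else 0 with hg_def
  set iQ0 : Ω → ℝ := fun ω => if Q ω = 0 then (1 : ℝ) else 0 with hiQ0_def
  set f : Ω → ℝ := fun ω => iQ0 ω * (h ω - m ω) / π ω with hf_def
  -- measurability
  have hg_meas : Measurable[m𝓕] g :=
    Measurable.ite (hL (measurableSet_singleton 1)) measurable_const measurable_const
  have hg_measF : Measurable[m𝓕] g := hg_meas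
  have hiQ0_meas : Measurable[m𝓖] iQ0 :=
    Measurable.ite (hQ (measurableSet_singleton 0)) measurable_const measurable_const
  have hf_sm : StronglyMeasurable[m𝓖] f :=
    ((hiQ0_meas.mul (hh.measurable.sub hm.measurable)).div hπ.measurable).stronglyMeasurable
  -- integrability
  have hg_int : Integrable g μ := by
    refine ⟨(hg_measF.aestronglyMeasurable : AEStronglyMeasurable[m𝓕] g μ), HasFiniteIntegral.of_bounded (C := 1) ?_⟩
    refine ae_of_all μ fun ω => ?_
    simp only [g, Real.norm_eq_abs]
    split <;> simp
  have hiQ0_le : ∀ ω, |iQ0 ω| ≤ 1 := by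
    intro ω; simp only [iQ0]; split <;> simp
  have hf_bd : ∀ᵐ ω ∂μ, ‖f ω‖ ≤ (|Ch| + |Cm|) / δ := by
    filter_upwards [hπ_bdd] with ω hω
    have hπpos : 0 < π ω := lt_of_lt_of_le hδ hω.1
    simp only [f, Real.norm_eq_abs, abs_div, abs_mul, abs_of_pos hπpos]
    have h1 : |iQ0 ω| * |h ω - m ω| ≤ |Ch| + |Cm| := by
      calc |iQ0 ω| * |h ω - m ω| ≤ 1 * |h ω - m ω| :=
            mul_le_mul_of_nonneg_right (hiQ0_le ω) (abs_nonneg _)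
        _ = |h ω - m ω| := one_mul _
        _ ≤ |h ω| + |m ω| := abs_sub _ _
        _ ≤ |Ch| + |Cm| := add_le_add ((hCh ω).trans (le_abs_self _))
            ((hCm ω).trans (le_abs_self _))
    exact div_le_div₀ (by positivity) h1 hδ hω.1
  have hfF : AEStronglyMeasurable[m𝓕] f μ := (hf_sm.mono hm𝓖).aestronglyMeasurable
  have hg_abs : ∀ ω, |g ω| ≤ 1 := by
    intro ω; simp only [g]; split <;> simp
  have hfg_int : Integrable (f * g) μ := by
    refine ⟨hfF.mul hg_measF.aestronglyMeasurable,
      HasFiniteIntegral.of_bounded (C := (|Ch| + |Cm|) / δ) ?_⟩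
    filter_upwards [hf_bd] with ω hω
    simp only [Pi.mul_apply, Real.norm_eq_abs, abs_mul]
    calc |f ω| * |g ω| ≤ (|Ch| + |Cm|) / δ * 1 := by
          refine mul_le_mul ?_ (hg_abs ω) (abs_nonneg _) (by positivity)
          simpa [Real.norm_eq_abs] using hω
      _ = (|Ch| + |Cm|) / δ := mul_one _
  have hh_int : Integrable h μ :=
    ⟨(hh.mono hm𝓖).aestronglyMeasurable,
      HasFiniteIntegral.of_bounded (C := Ch) (ae_of_all μ fun ω => by
        simpa [Real.norm_eq_abs] using hCh ω)⟩
  have hw_int : Integrable (fun ω => iQ0 ω * (h ω - m ω)) μ := by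
    refine ⟨(((hiQ0_meas.stronglyMeasurable.mul (hh.sub hm)).mono hm𝓖).aestronglyMeasurable),
      HasFiniteIntegral.of_bounded (C := |Ch| + |Cm|) (ae_of_all μ fun ω => ?_)⟩
    simp only [Real.norm_eq_abs, abs_mul]
    calc |iQ0 ω| * |h ω - m ω| ≤ 1 * (|Ch| + |Cm|) := by
          refine mul_le_mul (hiQ0_le ω) ?_ (abs_nonneg _) one_pos.le
          exact (abs_sub _ _).trans (add_le_add ((hCh ω).trans (le_abs_self _))
            ((hCm ω).trans (le_abs_self _)))
      _ = |Ch| + |Cm| := one_mul _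
  have hstep1 : ∫ ω, (f * g) ω ∂μ = ∫ ω, iQ0 ω * (h ω - m ω) ∂μ := by
    rw [← integral_condExp (f := f * g) hm𝓖,
      integral_congr_ae (condExp_mul_of_stronglyMeasurable_left hf_sm hfg_int hg_int)]
    refine integral_congr_ae ?_
    filter_upwards [hCLAR, hπ_bdd] with ω hC hπω
    have hπne : π ω ≠ 0 := (lt_of_lt_of_le hδ hπω.1).ne'
    by_cases hq : Q ω = 0
    · have hE : (μ[g|m𝓖]) ω = π ω := by simpa [hq] using hC
      simp only [Pi.mul_apply, f, iQ0, hq, if_pos]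
      rw [hE]; field_simp
    · simp [Pi.mul_apply, f, iQ0, hq]
  have hmain : ∀ᵐ ω ∂μ,
      ((if Q ω = 1 then (1 : ℝ) else 0) * h ω
        + iQ0 ω * (g ω / π ω) * h ω + iQ0 ω * (1 - g ω / π ω) * m ω)
      = h ω + ((f * g) ω - iQ0 ω * (h ω - m ω)) := by
    filter_upwards [hπ_bdd] with ω hπω
    have hπne : π ω ≠ 0 := (lt_of_lt_of_le hδ hπω.1).ne'
    rcases hQval ω with h0 | h1
    · have : ¬ (Q ω = 1) := by rw [h0]; norm_num
      simp only [Pi.mul_apply, f, iQ0, h0, if_pos, if_neg this, zero_ne_one, ↓reduceIte]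
      field_simp
      ring
    · have : ¬ (Q ω = 0) := by rw [h1]; norm_num
      simp [Pi.mul_apply, f, iQ0, h1, if_neg this]
  calc ∫ ω, ((if Q ω = 1 then (1 : ℝ) else 0) * h ω
        + iQ0 ω * (g ω / π ω) * h ω + iQ0 ω * (1 - g ω / π ω) * m ω) ∂μ
      = ∫ ω, (h ω + ((f * g) ω - iQ0 ω * (h ω - m ω))) ∂μ := integral_congr_ae hmain
    _ = ∫ ω, h ω ∂μ + ∫ ω, ((f * g) ω - iQ0 ω * (h ω - m ω)) ∂μ :=
        integral_add hh_int (hfg_int.sub hw_int)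
    _ = ∫ ω, h ω ∂μ + (∫ ω, (f * g) ω ∂μ - ∫ ω, iQ0 ω * (h ω - m ω) ∂μ) := by
        rw [integral_sub hfg_int hw_int]
    _ = ∫ ω, h ω ∂μ := by rw [hstep1, sub_self, add_zero]
end
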